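/- arXiv:2309.09043 — 7 statements merged into one kernel-verified Lean document; each statement's English description precedes it below -/
import Mathlib

section
/- Let f : ℝⁿ × ℝ^q → ℝⁿ be continuous, let [x⋆, x̄⋆] ⊆ ℝⁿ and [w, w̄] ⊆ ℝ^q be intervals, and let F^min be the minimal inclusion function of f, i.e., (F^min_low(a,b,w,w̄))_i = inf {f_i(x,w) : x ∈ [a,b], w ∈ [w,w̄]} and (F^min_up(a,b,w,w̄))_i = sup {f_i(x,w) : x ∈ [a,b], w ∈ [w,w̄]}. If there exists an index i such that either (F^min_low(x⋆, x̄⋆_{i:x⋆}, w, w̄))_i < 0 or (F^min_up(x⋆_{i:x̄⋆}, x̄⋆, w, w̄))_i > 0, then [x⋆, x̄⋆] is not [w,w̄]-robustly forward invariant: there exists a constant disturbance w ∈ [w,w̄], a C¹ curve x : [0,T] → ℝⁿ with x'(t) = f(x(t), w), x(0) ∈ [x⋆, x̄⋆], and a time t ∈ (0,T] with x(t) ∉ [x⋆, x̄⋆]. -/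
/-!
Take a point `p` of the offending face and a disturbance `w` at which `f_i` points out of the
box; they exist because the infimum (supremum) of `f_i` over the face is negative (positive).
Any solution of `x' = f(x, w)` with `x 0 = p` has its `i`-th coordinate on the face with outward
derivative, so it leaves the box immediately.

The solution comes from Peano's existence theorem. Near `p` the field agrees with a bounded,
uniformly continuous one, which is a uniform limit of Lipschitz fields (inf-convolutions). These
have Picard–Lindelöf solutions, which are equi-Lipschitz; by Arzelà–Ascoli a subsequence
converges uniformly, and since the derivatives converge uniformly too, the limit is a solution.
-/

open Set Filter Topology Metric
open scoped NNReal BoundedContinuousFunction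

section InfConvolution

variable {X : Type*} [PseudoMetricSpace X]

theorem exists_lipschitzWith_abs_sub_le_of_dist_lt {g : X → ℝ} {C δ ε : ℝ} {K : ℝ≥0}
    (hC : ∀ x, |g x| ≤ C) (hg : ∀ x y, dist x y < δ → |g x - g y| < ε) (hε : 0 ≤ ε)
    (hK : 2 * C ≤ K * δ) :
    ∃ G : X → ℝ, LipschitzWith K G ∧ (∀ x, |G x| ≤ C) ∧ ∀ x, |G x - g x| ≤ ε := by
  have hKd : ∀ x y : X, 0 ≤ (K : ℝ) * dist x y := fun _ _ => mul_nonneg K.2 dist_nonneg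
  have hbdd : ∀ x, BddBelow (range fun y => g y + K * dist x y) := fun x =>
    ⟨-C, by rintro _ ⟨y, rfl⟩; linarith [abs_le.1 (hC y), hKd x y]⟩
  set G : X → ℝ := fun x => ⨅ y, g y + K * dist x y
  have hG_le : ∀ x, G x ≤ g x := fun x => by
    simpa using ciInf_le (hbdd x) x
  have hG_ge : ∀ x, -C ≤ G x ∧ g x - ε ≤ G x := fun x => by
    have : Nonempty X := ⟨x⟩
    refine ⟨le_ciInf fun y => by linarith [abs_le.1 (hC y), hKd x y], le_ciInf fun y => ?_⟩
    -- Points at distance `≥ δ` cannot undercut `g x`, since `K * δ ≥ 2 * C`.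
    rcases lt_or_ge (dist x y) δ with hxy | hxy
    · linarith [(abs_lt.1 (hg x y hxy)).2, hKd x y]
    · have : (K : ℝ) * δ ≤ K * dist x y := by gcongr
      linarith [abs_le.1 (hC x), abs_le.1 (hC y)]
  refine ⟨G, LipschitzWith.of_le_add_mul K fun x y => ?_, fun x => ?_, fun x => ?_⟩
  · have : Nonempty X := ⟨x⟩
    rw [← sub_le_iff_le_add]
    refine le_ciInf fun z => ?_
    calc G x - K * dist x y ≤ g z + K * dist x z - K * dist x y := by
          gcongr; exact ciInf_le (hbdd x) z
      _ ≤ g z + K * dist y z := by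
          have : (K : ℝ) * dist x z ≤ K * (dist x y + dist y z) := by
            gcongr; exact dist_triangle x y z
          linarith
  · exact abs_le.2 ⟨(hG_ge x).1, (hG_le x).trans (abs_le.1 (hC x)).2⟩
  · exact abs_le.2 ⟨by linarith [(hG_ge x).2], by linarith [hG_le x]⟩

theorem UniformContinuous.exists_lipschitzWith_norm_sub_le {ι : Type*} [Fintype ι]
    {g : X → ι → ℝ} (hg : UniformContinuous g) {C ε : ℝ} (hC : ∀ x, ‖g x‖ ≤ C) (hε : 0 < ε) :
    ∃ (K : ℝ≥0) (G : X → ι → ℝ), LipschitzWith K G ∧ (∀ x, ‖G x‖ ≤ C) ∧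
      ∀ x, ‖G x - g x‖ ≤ ε := by
  obtain ⟨δ, hδ, hgδ⟩ := Metric.uniformContinuous_iff.1 hg ε hε
  obtain ⟨K, hK⟩ : ∃ K : ℝ≥0, 2 * C ≤ K * δ :=
    ⟨(2 * C / δ).toNNReal, by
      rw [← div_le_iff₀ hδ]; exact Real.le_coe_toNNReal _⟩
  have hcoord : ∀ j, ∃ G : X → ℝ, LipschitzWith K G ∧ (∀ x, |G x| ≤ C) ∧
      ∀ x, |G x - g x j| ≤ ε := fun j =>
    exists_lipschitzWith_abs_sub_le_of_dist_lt (fun x => (norm_le_pi_norm (g x) j).trans (hC x))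
      (fun x y hxy => (dist_le_pi_dist (g x) (g y) j).trans_lt (hgδ hxy)) hε.le hK
  choose G hGK hGC hGg using hcoord
  refine ⟨K, fun x j => G j x, LipschitzWith.of_dist_le_mul fun x y => ?_, fun x => ?_,
    fun x => ?_⟩
  · exact (dist_pi_le_iff (by positivity)).2 fun j => (hGK j).dist_le_mul x y
  · exact (pi_norm_le_iff_of_nonneg ((norm_nonneg _).trans (hC x))).2 fun j => hGC j x
  · exact (pi_norm_le_iff_of_nonneg hε.le).2 fun j => hGg j x

end InfConvolution

theorem LipschitzWith.exists_lipschitzOnWith_forall_mem_Ioo_hasDerivAt {E : Type*}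
    [NormedAddCommGroup E] [NormedSpace ℝ E] [CompleteSpace E] {G : E → E} {K C : ℝ≥0}
    (hG : LipschitzWith K G) (hC : ∀ x, ‖G x‖ ≤ C) (x₀ : E) {T : ℝ} (hT : 0 ≤ T) :
    ∃ α : ℝ → E, α 0 = x₀ ∧ LipschitzOnWith C α (Icc (-T) T) ∧
      ∀ t ∈ Ioo (-T) T, HasDerivAt α (G (α t)) t := by
  have hPL : IsPicardLindelof (fun _ => G) (tmin := -T) (tmax := T)
      ⟨0, by constructor <;> linarith⟩ x₀ (C * T.toNNReal) 0 C K :=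
    .of_time_independent (fun x _ => hC x) hG.lipschitzOnWith (by simp [hT])
  obtain ⟨α, hα0, hα⟩ := hPL.exists_eq_forall_mem_Icc_hasDerivWithinAt₀
  refine ⟨α, hα0, (convex_Icc _ _).lipschitzOnWith_of_nnnorm_hasDerivWithin_le hα
    fun t _ => by rw [← NNReal.coe_le_coe, coe_nnnorm]; exact hC _, fun t ht => ?_⟩
  exact (hα t (Ioo_subset_Icc_self ht)).hasDerivAt (Icc_mem_nhds ht.1 ht.2)

theorem TendstoUniformly.comp_tendstoUniformlyOn {ι α β γ : Type*} [UniformSpace β]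
    [UniformSpace γ] {p : Filter ι} {G : ι → β → γ} {g : β → γ} {F : ι → α → β} {f : α → β}
    {s : Set α} (hG : TendstoUniformly G g p) (hg : UniformContinuous g)
    (hF : TendstoUniformlyOn F f p s) :
    TendstoUniformlyOn (fun n x => G n (F n x)) (fun x => g (f x)) p s := by
  intro u hu
  obtain ⟨v, hv, hvu⟩ := comp_mem_uniformity_sets hu
  filter_upwards [hG v hv, hg.comp_tendstoUniformlyOn hF v hv] with n hGn hFn x hx
  exact hvu ⟨g (F n x), hFn x hx, hGn (F n x)⟩

theorem exists_tendstoUniformlyOn_subseq_of_lipschitzOnWith {X E : Type*} [PseudoMetricSpace X]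
    [MetricSpace E] {s : Set X} (hs : IsCompact s) {S : Set E} (hS : IsCompact S) {K : ℝ≥0}
    {α : ℕ → X → E} (hα : ∀ m, LipschitzOnWith K (α m) s) (hαS : ∀ m, MapsTo (α m) s S) :
    ∃ (x : X → E) (φ : ℕ → ℕ), StrictMono φ ∧ TendstoUniformlyOn (fun m => α (φ m)) x atTop s := by
  classical
  have : CompactSpace s := isCompact_iff_compactSpace.1 hs
  let F : ℕ → s →ᵇ E := fun m =>
    .mkOfCompact ⟨s.domRestrict (α m), (hα m).to_restrict.continuous⟩
  have hequi : Equicontinuous ((↑) : range F → s → E) :=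
    (LipschitzWith.uniformEquicontinuous _ K fun ⟨_, m, hm⟩ => hm ▸ (hα m).to_restrict)
      |>.equicontinuous
  obtain ⟨x, -, φ, hφ, hlim⟩ := (BoundedContinuousFunction.arzela_ascoli S hS (range F)
    (by rintro _ t ⟨m, rfl⟩; exact hαS m t.2) hequi).tendsto_subseq
      fun m => subset_closure (mem_range_self m)
  refine ⟨fun t => if h : t ∈ s then x ⟨t, h⟩ else α 0 t, φ, hφ, ?_⟩
  rw [tendstoUniformlyOn_iff_tendstoUniformly_comp_coe]
  convert BoundedContinuousFunction.tendsto_iff_tendstoUniformly.1 hlim using 1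
  · rfl
  · funext t
    simp [t.2]

theorem UniformContinuous.exists_forall_mem_Ioo_hasDerivAt {ι : Type*} [Fintype ι]
    {g : (ι → ℝ) → ι → ℝ} (hg : UniformContinuous g) {C : ℝ≥0} (hC : ∀ x, ‖g x‖ ≤ C)
    (x₀ : ι → ℝ) {T : ℝ} (hT : 0 ≤ T) :
    ∃ y : ℝ → ι → ℝ, y 0 = x₀ ∧ ∀ t ∈ Ioo (-T) T, HasDerivAt y (g (y t)) t := by
  have happrox : ∀ m : ℕ, ∃ (K : ℝ≥0) (G : (ι → ℝ) → ι → ℝ), LipschitzWith K G ∧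
      (∀ x, ‖G x‖ ≤ C) ∧ ∀ x, ‖G x - g x‖ ≤ 1 / (m + 1) := fun m =>
    hg.exists_lipschitzWith_norm_sub_le hC Nat.one_div_pos_of_nat
  choose K G hGK hGC hGg using happrox
  choose α hα0 hαC hα using fun m =>
    (hGK m).exists_lipschitzOnWith_forall_mem_Ioo_hasDerivAt (hGC m) x₀ hT
  have h0 : (0 : ℝ) ∈ Icc (-T) T := ⟨by linarith, hT⟩
  have hball : ∀ m, MapsTo (α m) (Icc (-T) T) (closedBall x₀ (C * T)) := fun m t ht => by
    rw [mem_closedBall, ← hα0 m]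
    calc dist (α m t) (α m 0) ≤ C * dist t 0 := (hαC m).dist_le_mul t ht 0 h0
      _ ≤ C * T := by gcongr; rw [Real.dist_0_eq_abs]; exact abs_le.2 ht
  obtain ⟨y, φ, hφ, hαy⟩ := exists_tendstoUniformlyOn_subseq_of_lipschitzOnWith isCompact_Icc
    (isCompact_closedBall x₀ (C * T)) hαC hball
  have hGg : TendstoUniformly G g atTop := by
    refine Metric.tendstoUniformly_iff.2 fun ε hε => ?_
    obtain ⟨N, hN⟩ := exists_nat_one_div_lt hε
    refine eventually_atTop.2 ⟨N, fun m hm x => ?_⟩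
    rw [dist_comm, dist_eq_norm]
    calc ‖G m x - g x‖ ≤ 1 / (m + 1) := hGg m x
      _ ≤ 1 / (N + 1) := by gcongr
      _ < ε := hN
  have hderiv : TendstoUniformlyOn (fun m t => G (φ m) (α (φ m) t)) (fun t => g (y t)) atTop
      (Ioo (-T) T) :=
    TendstoUniformly.comp_tendstoUniformlyOn (G := G ∘ φ)
      (fun u hu => hφ.tendsto_atTop.eventually (hGg u hu)) hg (hαy.mono Ioo_subset_Icc_self)
  refine ⟨y, tendsto_nhds_unique (hαy.tendsto_at h0) (by simp [hα0]), fun t ht => ?_⟩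
  exact hasDerivAt_of_tendstoUniformlyOn isOpen_Ioo hderiv (.of_forall fun m => hα (φ m))
    (fun s hs => hαy.tendsto_at (Ioo_subset_Icc_self hs)) ht

theorem exists_lipschitzWith_retraction_closedBall {ι : Type*} [Fintype ι] (x₀ : ι → ℝ) {r : ℝ}
    (hr : 0 ≤ r) :
    ∃ π : (ι → ℝ) → ι → ℝ, LipschitzWith 1 π ∧ MapsTo π univ (closedBall x₀ r) ∧
      EqOn π id (closedBall x₀ r) := by
  have hle : ∀ j, x₀ j - r ≤ x₀ j + r := fun j => by linarith
  -- In the sup norm the ball is a box, so clamping each coordinate retracts onto it.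
  refine ⟨fun z j => projIcc (x₀ j - r) (x₀ j + r) (hle j) (z j),
    .mk_one fun z z' => (dist_pi_le_iff dist_nonneg).2 fun j => ?_, fun z _ => ?_,
    fun z hz => funext fun j => ?_⟩
  · exact ((LipschitzWith.projIcc (hle j)).dist_le_mul _ _).trans
      (by simpa using dist_le_pi_dist z z' j)
  · refine mem_closedBall.2 ((dist_pi_le_iff hr).2 fun j => ?_)
    have := (projIcc (x₀ j - r) (x₀ j + r) (hle j) (z j)).2
    rw [Real.dist_eq, abs_sub_le_iff]
    constructor <;> linarith [this.1, this.2]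
  · have := abs_sub_le_iff.1 ((Real.dist_eq _ _).symm.trans_le
      ((dist_le_pi_dist z x₀ j).trans (mem_closedBall.1 hz)))
    simp [projIcc_of_mem (hle j) (⟨by linarith, by linarith⟩ : z j ∈ Icc (x₀ j - r) (x₀ j + r))]

theorem Continuous.exists_uniformContinuous_eqOn_closedBall {ι E : Type*} [Fintype ι]
    [SeminormedAddCommGroup E] {F : (ι → ℝ) → E} (hF : Continuous F) (x₀ : ι → ℝ) {r : ℝ}
    (hr : 0 ≤ r) :
    ∃ (g : (ι → ℝ) → E) (C : ℝ≥0), UniformContinuous g ∧ (∀ x, ‖g x‖ ≤ C) ∧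
      EqOn g F (closedBall x₀ r) := by
  obtain ⟨π, hπ, hπB, hπ_id⟩ := exists_lipschitzWith_retraction_closedBall x₀ hr
  have hB := isCompact_closedBall x₀ r
  obtain ⟨C, hC⟩ := hB.exists_bound_of_continuousOn hF.continuousOn
  refine ⟨F ∘ π, C.toNNReal, ?_, fun z => (hC _ (hπB trivial)).trans (Real.le_coe_toNNReal C),
    fun z hz => congrArg F (hπ_id hz)⟩
  exact (uniformContinuousOn_iff_restrict.1 (hB.uniformContinuousOn_of_continuous
    hF.continuousOn)).comp (hπ.uniformContinuous.subtype_mk fun z => hπB trivial)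

theorem Continuous.exists_forall_mem_Ioo_hasDerivAt {ι : Type*} [Fintype ι]
    {F : (ι → ℝ) → ι → ℝ} (hF : Continuous F) (x₀ : ι → ℝ) :
    ∃ T > 0, ∃ y : ℝ → ι → ℝ, y 0 = x₀ ∧ ∀ t ∈ Ioo (-T) T, HasDerivAt y (F (y t)) t := by
  obtain ⟨g, C, hg, hC, hgF⟩ := hF.exists_uniformContinuous_eqOn_closedBall x₀ zero_le_one
  set T : ℝ := 1 / (C + 1)
  have hT : 0 < T := by positivity
  obtain ⟨y, hy0, hy⟩ := hg.exists_forall_mem_Ioo_hasDerivAt hC x₀ hT.le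
  have hball : ∀ t ∈ Ioo (-T) T, y t ∈ closedBall x₀ 1 := fun t ht => by
    rw [mem_closedBall, dist_eq_norm, ← hy0]
    calc ‖y t - y 0‖ ≤ C * ‖t - 0‖ :=
          (convex_Ioo _ _).norm_image_sub_le_of_norm_hasDerivWithin_le
            (fun s hs => (hy s hs).hasDerivWithinAt) (fun s _ => hC _) ⟨by linarith, hT⟩ ht
      _ ≤ C * T := by gcongr; rw [sub_zero, Real.norm_eq_abs]; exact (abs_lt.2 ht).le
      _ ≤ 1 := by rw [mul_one_div, div_le_one (by positivity)]; linarith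
  exact ⟨T, hT, y, hy0, fun t ht => hgF (hball t ht) ▸ hy t ht⟩

theorem HasDerivAt.eventually_nhdsGT_lt {u : ℝ → ℝ} {c t₀ : ℝ} (hu : HasDerivAt u c t₀)
    (hc : c < 0) : ∀ᶠ t in 𝓝[>] t₀, u t < u t₀ := by
  have hslope := (hasDerivAt_iff_tendsto_slope.1 hu).mono_left
    (nhdsWithin_mono t₀ fun _ ht => ne_of_gt ht)
  filter_upwards [hslope.eventually_lt_const hc, self_mem_nhdsWithin] with t ht hlt
  exact (slope_neg_iff_of_le (le_of_lt hlt)).1 ht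

theorem HasDerivAt.eventually_nhdsGT_notMem_Icc {ι : Type*} [Fintype ι] {x : ℝ → ι → ℝ}
    {v : ι → ℝ} {t₀ : ℝ} (hx : HasDerivAt x v t₀) {a b : ι → ℝ} {i : ι}
    (h : (x t₀ i = a i ∧ v i < 0) ∨ (x t₀ i = b i ∧ 0 < v i)) :
    ∀ᶠ t in 𝓝[>] t₀, x t ∉ Icc a b := by
  have hxi : HasDerivAt (fun t => x t i) (v i) t₀ := hasDerivAt_pi.1 hx i
  rcases h with ⟨ha, hv⟩ | ⟨hb, hv⟩
  · filter_upwards [hxi.eventually_nhdsGT_lt hv] with t ht hmem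
    exact (hmem.1 i).not_gt (ha ▸ ht)
  · filter_upwards [hxi.neg.eventually_nhdsGT_lt (neg_lt_zero.2 hv)] with t ht hmem
    exact (hmem.2 i).not_gt (by simp only [Pi.neg_apply, neg_lt_neg_iff] at ht; rwa [hb] at ht)

-- `Real.sInf` is `0` on empty sets and on sets unbounded below, so no side conditions are needed.
theorem exists_lt_zero_of_sInf_image_lt_zero {α : Type*} {s : Set α} {φ : α → ℝ}
    (h : sInf (φ '' s) < 0) : ∃ a ∈ s, φ a < 0 := by
  by_contra! h'
  exact h.not_ge (Real.sInf_nonneg (forall_mem_image.2 h'))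

theorem exists_zero_lt_of_zero_lt_sSup_image {α : Type*} {s : Set α} {φ : α → ℝ}
    (h : 0 < sSup (φ '' s)) : ∃ a ∈ s, 0 < φ a := by
  by_contra! h'
  exact h.not_ge (Real.sSup_nonpos (forall_mem_image.2 h'))

theorem eq_and_mem_Icc_of_mem_Icc_update_right {ι α : Type*} [DecidableEq ι] [PartialOrder α]
    {a b x : ι → α} {i : ι} (hab : a ≤ b) (hx : x ∈ Icc a (Function.update b i (a i))) :
    x i = a i ∧ x ∈ Icc a b :=
  ⟨le_antisymm (by simpa using hx.2 i) (hx.1 i),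
    hx.1, hx.2.trans (update_le_self_iff.2 (hab i))⟩

theorem eq_and_mem_Icc_of_mem_Icc_update_left {ι α : Type*} [DecidableEq ι] [PartialOrder α]
    {a b x : ι → α} {i : ι} (hab : a ≤ b) (hx : x ∈ Icc (Function.update a i (b i)) b) :
    x i = b i ∧ x ∈ Icc a b :=
  ⟨le_antisymm (hx.2 i) (by simpa using hx.1 i),
    (le_update_self_iff.2 (hab i)).trans hx.1, hx.2⟩

theorem not_forward_invariant_of_minimal_violation_general {n q : ℕ}
    (f : (Fin n → ℝ) → (Fin q → ℝ) → (Fin n → ℝ))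
    (hf_cont : Continuous fun p : (Fin n → ℝ) × (Fin q → ℝ) => f p.1 p.2)
    (xl xu : Fin n → ℝ) (hx : xl ≤ xu)
    (wl wu : Fin q → ℝ)
    (i : Fin n)
    (hviol :
      sInf ((fun p : (Fin n → ℝ) × (Fin q → ℝ) => f p.1 p.2 i) ''
          (Icc xl (Function.update xu i (xl i)) ×ˢ Icc wl wu)) < 0 ∨
      0 < sSup ((fun p : (Fin n → ℝ) × (Fin q → ℝ) => f p.1 p.2 i) ''
          (Icc (Function.update xl i (xu i)) xu ×ˢ Icc wl wu))) :
    ∃ (w : Fin q → ℝ) (T : ℝ) (x : ℝ → Fin n → ℝ),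
      w ∈ Icc wl wu ∧ 0 < T ∧
      (∀ t ∈ Icc (0:ℝ) T, HasDerivAt x (f (x t) w) t) ∧
      x 0 ∈ Icc xl xu ∧ ∃ t ∈ Ioc (0:ℝ) T, x t ∉ Icc xl xu := by
  obtain ⟨p, hp, w, hw, hexit⟩ : ∃ p ∈ Icc xl xu, ∃ w ∈ Icc wl wu,
      (p i = xl i ∧ f p w i < 0) ∨ (p i = xu i ∧ 0 < f p w i) := by
    rcases hviol with h | h
    · obtain ⟨⟨p, w⟩, ⟨hp, hw⟩, hneg⟩ := exists_lt_zero_of_sInf_image_lt_zero h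
      obtain ⟨hpi, hp⟩ := eq_and_mem_Icc_of_mem_Icc_update_right hx hp
      exact ⟨p, hp, w, hw, .inl ⟨hpi, hneg⟩⟩
    · obtain ⟨⟨p, w⟩, ⟨hp, hw⟩, hpos⟩ := exists_zero_lt_of_zero_lt_sSup_image h
      obtain ⟨hpi, hp⟩ := eq_and_mem_Icc_of_mem_Icc_update_left hx hp
      exact ⟨p, hp, w, hw, .inr ⟨hpi, hpos⟩⟩
  obtain ⟨T, hT, x, hx0, hxf⟩ :=
    (hf_cont.comp (.prodMk_left w) : Continuous fun z => f z w).exists_forall_mem_Ioo_hasDerivAt p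
  have hleave := (hxf 0 ⟨by linarith, hT⟩).eventually_nhdsGT_notMem_Icc (by rwa [hx0])
  obtain ⟨t, hout, ht⟩ := (hleave.and (Ioo_mem_nhdsGT hT)).exists
  exact ⟨w, t, x, hw, ht.1, fun s hs => hxf s ⟨by linarith [hs.1], hs.2.trans_lt ht.2⟩,
    hx0 ▸ hp, t, ⟨ht.1, le_rfl⟩, hout⟩

/-- If the minimal inclusion function of a continuous `f`, evaluated on some
face of the hyper-rectangle `[xl⋆, xu⋆]`, points strictly out of the rectangle, then the
rectangle is not `[wl,wu]`-robustly forward invariant: some solution with a constant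
disturbance starts in the rectangle and leaves it. -/
theorem not_forward_invariant_of_minimal_violation {n q : ℕ}
    (f : (Fin n → ℝ) → (Fin q → ℝ) → (Fin n → ℝ))
    (hf_cont : Continuous fun p : (Fin n → ℝ) × (Fin q → ℝ) => f p.1 p.2)
    (xl xu : Fin n → ℝ) (hx : xl ≤ xu)
    (wl wu : Fin q → ℝ) (hw : wl ≤ wu)
    (i : Fin n)
    (hviol :
      sInf ((fun p : (Fin n → ℝ) × (Fin q → ℝ) => f p.1 p.2 i) ''
          (Icc xl (Function.update xu i (xl i)) ×ˢ Icc wl wu)) < 0 ∨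
      0 < sSup ((fun p : (Fin n → ℝ) × (Fin q → ℝ) => f p.1 p.2 i) ''
          (Icc (Function.update xl i (xu i)) xu ×ˢ Icc wl wu))) :
    ∃ (w : Fin q → ℝ) (T : ℝ) (x : ℝ → Fin n → ℝ),
      w ∈ Icc wl wu ∧ 0 < T ∧
      (∀ t ∈ Icc (0:ℝ) T, HasDerivAt x (f (x t) w) t) ∧
      x 0 ∈ Icc xl xu ∧ ∃ t ∈ Ioc (0:ℝ) T, x t ∉ Icc xl xu :=
  not_forward_invariant_of_minimal_violation_general f hf_cont xl xu hx wl wu i hviol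
end

section
/- Let E = (E_low, E_up) : ℝⁿ × ℝⁿ × ℝ^q × ℝ^q → ℝⁿ × ℝⁿ be continuous, fix [w,w̄] ⊆ ℝ^q, and let t ↦ (x(t), x̄(t)) be a C¹ solution on [0,∞) of x'(t) = E_low(x(t), x̄(t), w, w̄), x̄'(t) = E_up(x(t), x̄(t), w, w̄). Suppose that for each index i the coordinate t ↦ x_i(t) is nondecreasing, t ↦ x̄_i(t) is nonincreasing, and x(t) ≤ x̄(t) for all t ≥ 0. Then there exist x⋆, x̄⋆ ∈ ℝⁿ with x⋆ ≤ x̄⋆ such that x(t) → x⋆ and x̄(t) → x̄⋆ as t → ∞, and (x⋆, x̄⋆) is an equilibrium of the embedding system: E_low(x⋆, x̄⋆, w, w̄) = 0 and E_up(x⋆, x̄⋆, w, w̄) = 0. -/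
open Set Filter

/-- If `f` has derivative `g t` at every `t ≥ 0`, `f` converges at infinity, and `g`
converges to `L` at infinity, then `L = 0`. -/
lemma aux_deriv_limit_zero (f g : ℝ → ℝ) (a L : ℝ)
    (hf : ∀ t, 0 ≤ t → HasDerivAt f (g t) t)
    (hfl : Tendsto f atTop (nhds a))
    (hgl : Tendsto g atTop (nhds L)) : L = 0 := by
  by_contra hL
  have hε : 0 < |L| / 2 := by positivity
  obtain ⟨T₁, hT₁⟩ := (Metric.tendsto_atTop.mp hgl) (|L| / 2) hε
  obtain ⟨T₂, hT₂⟩ := (Metric.tendsto_atTop.mp hfl) (|L| / 4) (by positivity)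
  set T : ℝ := max 0 (max T₁ T₂) with hT
  have hT0 : (0:ℝ) ≤ T := le_max_left _ _
  have hTT₁ : T₁ ≤ T := (le_max_left _ _).trans (le_max_right _ _)
  have hTT₂ : T₂ ≤ T := (le_max_right _ _).trans (le_max_right _ _)
  have hlt : T < T + 1 := by linarith
  have hcont : ContinuousOn f (Icc T (T + 1)) := by
    intro x hx
    exact ((hf x (hT0.trans hx.1)).continuousAt).continuousWithinAt
  have hderiv : ∀ x ∈ Ioo T (T + 1), HasDerivAt f (g x) x := fun x hx =>
    hf x (hT0.trans hx.1.le)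
  obtain ⟨c, hc, hceq⟩ := exists_hasDerivAt_eq_slope f g hlt hcont hderiv
  have h1 : dist (g c) L < |L| / 2 := hT₁ c (hTT₁.trans hc.1.le)
  have h2 : dist (f T) a < |L| / 4 := hT₂ T hTT₂
  have h3 : dist (f (T + 1)) a < |L| / 4 := hT₂ (T + 1) (by linarith)
  have hslope : g c = f (T + 1) - f T := by
    rw [hceq]; ring_nf
  rw [Real.dist_eq] at h1 h2 h3
  rw [hslope] at h1
  have : |L| ≤ |f (T + 1) - f T - L| + |f (T+1) - a| + |f T - a| := by
    have := abs_sub_abs_le_abs_sub L (f (T+1) - f T)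
    have h := abs_sub (f (T+1) - f T) L
    calc |L| = |(L - (f (T+1) - f T)) + ((f (T+1) - a) - (f T - a))| := by ring_nf
    _ ≤ |L - (f (T+1) - f T)| + |(f (T+1) - a) - (f T - a)| := abs_add_le _ _
    _ ≤ |L - (f (T+1) - f T)| + (|f (T+1) - a| + |f T - a|) := by
        gcongr; exact abs_sub _ _
    _ = |f (T + 1) - f T - L| + |f (T+1) - a| + |f T - a| := by
        rw [abs_sub_comm]; ring
  linarith
set_option maxHeartbeats 800000 in
/-- A componentwise monotone, order-bounded C¹ trajectory of the continuous
autonomous embedding system converges to an equilibrium point `(xs, xbs)` with `xs ≤ xbs`. -/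
theorem embedding_trajectory_converges_to_equilibrium {n q : ℕ}
    (Elow Eup : (Fin n → ℝ) → (Fin n → ℝ) → (Fin q → ℝ) → (Fin q → ℝ) → (Fin n → ℝ))
    (wl wu : Fin q → ℝ) (hw : wl ≤ wu)
    (hcont : Continuous fun p : (Fin n → ℝ) × (Fin n → ℝ) =>
      (Elow p.1 p.2 wl wu, Eup p.1 p.2 wl wu))
    (xlo xhi : ℝ → Fin n → ℝ)
    (hode_lo : ∀ t, 0 ≤ t → HasDerivAt xlo (Elow (xlo t) (xhi t) wl wu) t)
    (hode_hi : ∀ t, 0 ≤ t → HasDerivAt xhi (Eup (xlo t) (xhi t) wl wu) t)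
    (hmono_lo : ∀ i : Fin n, MonotoneOn (fun t => xlo t i) (Ici (0:ℝ)))
    (hmono_hi : ∀ i : Fin n, AntitoneOn (fun t => xhi t i) (Ici (0:ℝ)))
    (hle : ∀ t, 0 ≤ t → xlo t ≤ xhi t) :
    ∃ xs xbs : Fin n → ℝ, xs ≤ xbs ∧
      Tendsto xlo atTop (nhds xs) ∧
      Tendsto xhi atTop (nhds xbs) ∧
      Elow xs xbs wl wu = 0 ∧ Eup xs xbs wl wu = 0 := by
  have hmax : ∀ t : ℝ, (0:ℝ) ≤ max t 0 := fun t => le_max_right _ _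
  have heq : ∀ᶠ t : ℝ in atTop, max t 0 = t := by
    filter_upwards [eventually_ge_atTop (0:ℝ)] with t ht using max_eq_left ht
  -- convergence of each coordinate of xlo
  have hlo : ∀ i, ∃ l, Tendsto (fun t => xlo t i) atTop (nhds l) := by
    intro i
    set g : ℝ → ℝ := fun t => xlo (max t 0) i with hg
    have hgmono : Monotone g := fun a b hab =>
      hmono_lo i (hmax a) (hmax b) (max_le_max hab le_rfl)
    have hbdd : BddAbove (Set.range g) := by
      refine ⟨xhi 0 i, ?_⟩
      rintro _ ⟨t, rfl⟩
      exact (hle _ (hmax t) i).trans (hmono_hi i (le_refl (0:ℝ)) (hmax t) (hmax t))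
    refine ⟨⨆ t, g t, ?_⟩
    have := tendsto_atTop_ciSup hgmono hbdd
    exact this.congr' (by filter_upwards [heq] with t ht; rw [hg]; simp [ht])
  have hhi : ∀ i, ∃ l, Tendsto (fun t => xhi t i) atTop (nhds l) := by
    intro i
    set g : ℝ → ℝ := fun t => xhi (max t 0) i with hg
    have hgmono : Antitone g := fun a b hab =>
      hmono_hi i (hmax a) (hmax b) (max_le_max hab le_rfl)
    have hbdd : BddBelow (Set.range g) := by
      refine ⟨xlo 0 i, ?_⟩
      rintro _ ⟨t, rfl⟩
      exact (hmono_lo i (le_refl (0:ℝ)) (hmax t) (hmax t)).trans (hle _ (hmax t) i)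
    refine ⟨⨅ t, g t, ?_⟩
    have := tendsto_atTop_ciInf hgmono hbdd
    exact this.congr' (by filter_upwards [heq] with t ht; rw [hg]; simp [ht])
  choose xs hxs using hlo
  choose xbs hxbs using hhi
  have htlo : Tendsto xlo atTop (nhds xs) := tendsto_pi_nhds.mpr hxs
  have hthi : Tendsto xhi atTop (nhds xbs) := tendsto_pi_nhds.mpr hxbs
  have hlele : xs ≤ xbs := by
    intro i
    refine le_of_tendsto_of_tendsto (hxs i) (hxbs i) ?_
    filter_upwards [eventually_ge_atTop (0:ℝ)] with t ht using hle t ht i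
  -- continuity: the vector fields converge along the trajectory
  have hpair : Tendsto (fun t => ((xlo t, xhi t) : (Fin n → ℝ) × (Fin n → ℝ))) atTop
      (nhds (xs, xbs)) := htlo.prodMk_nhds hthi
  have hEpair := (hcont.tendsto (xs, xbs)).comp hpair
  have hElo : Tendsto (fun t => Elow (xlo t) (xhi t) wl wu) atTop
      (nhds (Elow xs xbs wl wu)) := (continuous_fst.tendsto _).comp hEpair
  have hEhi : Tendsto (fun t => Eup (xlo t) (xhi t) wl wu) atTop
      (nhds (Eup xs xbs wl wu)) := (continuous_snd.tendsto _).comp hEpair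
  refine ⟨xs, xbs, hlele, htlo, hthi, ?_, ?_⟩
  · funext i
    exact aux_deriv_limit_zero (fun t => xlo t i)
      (fun t => Elow (xlo t) (xhi t) wl wu i) (xs i) _
      (fun t ht => (hasDerivAt_pi.mp (hode_lo t ht)) i) (hxs i)
      ((continuous_apply i).tendsto _ |>.comp hElo)
  · funext i
    exact aux_deriv_limit_zero (fun t => xhi t i)
      (fun t => Eup (xlo t) (xhi t) wl wu i) (xbs i) _
      (fun t ht => (hasDerivAt_pi.mp (hode_hi t ht)) i) (hxbs i)
      ((continuous_apply i).tendsto _ |>.comp hEhi)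
end

section
/- Let f : ℝⁿ × ℝ^q → ℝⁿ, S ⊆ ℝⁿ, and let (F_low, F_up) be a monotone S-localized inclusion function for f with induced embedding vector field E = (E_low, E_up). Fix [w,w̄] ⊆ ℝ^q and i ∈ {1,…,n}. Suppose (x, x̄) and (z, z̄) satisfy x ≤ z, z̄ ≤ x̄, z ≤ z̄, x ≤ x̄, with [x, x̄] ⊆ S. If x_i = z_i, then E_low_i(x, x̄, w, w̄) ≤ E_low_i(z, z̄, w, w̄); and if x̄_i = z̄_i, then E_up_i(x, x̄, w, w̄) ≥ E_up_i(z, z̄, w, w̄). That is, the embedding vector field satisfies the Kamke–Müller quasimonotonicity condition with respect to the southeast order. -/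
open Set

/-- The embedding vector field induced by a monotone `S`-localized inclusion
function satisfies the Kamke–Müller quasimonotonicity condition w.r.t. the southeast order:
if `(z, z̄)` lies southeast-above `(x, x̄)` inside `[x, x̄] ⊆ S` and the `i`-th lower (resp.
upper) components agree, then the `i`-th lower (resp. upper) embedding components are ordered. -/
theorem embedding_kamke_muller {n q : ℕ}
    (f : (Fin n → ℝ) → (Fin q → ℝ) → (Fin n → ℝ))
    (S : Set (Fin n → ℝ))
    (Flow Fup : (Fin n → ℝ) → (Fin n → ℝ) → (Fin q → ℝ) → (Fin q → ℝ) → (Fin n → ℝ))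
    (wl wu : Fin q → ℝ) (hw : wl ≤ wu)
    -- `(Flow, Fup)` is an `S`-localized inclusion function for `f`
    (hIncl : ∀ a b : Fin n → ℝ, a ≤ b → Icc a b ⊆ S →
      ∀ x ∈ Icc a b, ∀ w ∈ Icc wl wu,
        Flow a b wl wu ≤ f x w ∧ f x w ≤ Fup a b wl wu)
    -- monotonicity: `[a,b] ⊆ [c,d] ⊆ S` implies tighter bounds on the smaller interval
    (hMono : ∀ a b c d : Fin n → ℝ, c ≤ a → a ≤ b → b ≤ d → Icc c d ⊆ S →
      Flow c d wl wu ≤ Flow a b wl wu ∧ Fup a b wl wu ≤ Fup c d wl wu)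
    (x xbar z zbar : Fin n → ℝ)
    (hxz : x ≤ z) (hzx : zbar ≤ xbar) (hz : z ≤ zbar) (hx : x ≤ xbar)
    (hS : Icc x xbar ⊆ S) (i : Fin n) :
    (x i = z i →
      Flow x (Function.update xbar i (x i)) wl wu i ≤
        Flow z (Function.update zbar i (z i)) wl wu i) ∧
    (xbar i = zbar i →
      Fup (Function.update z i (zbar i)) zbar wl wu i ≤
        Fup (Function.update x i (xbar i)) xbar wl wu i) := by
  constructor
  · intro hi
    have hMono' := hMono z (Function.update zbar i (z i)) x (Function.update xbar i (x i))
      hxz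
      (by intro j; rcases eq_or_ne j i with rfl|hj
          · simp
          · simpa [Function.update_of_ne hj] using hz j)
      (by intro j; rcases eq_or_ne j i with rfl|hj
          · simp [hi]
          · simpa [Function.update_of_ne hj] using hzx j)
      (fun p hp => hS ⟨hp.1, fun j => by
        rcases eq_or_ne j i with rfl|hj
        · calc p j ≤ Function.update xbar j (x j) j := hp.2 j
            _ = x j := by simp
            _ ≤ xbar j := hx j
        · simpa [Function.update_of_ne hj] using hp.2 j⟩)
    exact hMono'.1 i
  · intro hi
    have hMono' := hMono (Function.update z i (zbar i)) zbar (Function.update x i (xbar i)) xbar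
      (by intro j; rcases eq_or_ne j i with rfl|hj
          · simp [hi]
          · simpa [Function.update_of_ne hj] using hxz j)
      (by intro j; rcases eq_or_ne j i with rfl|hj
          · simp
          · simpa [Function.update_of_ne hj] using hz j)
      hzx
      (fun p hp => hS ⟨fun j => by
        rcases eq_or_ne j i with rfl|hj
        · calc x j ≤ xbar j := hx j
            _ = Function.update x j (xbar j) j := by simp
            _ ≤ p j := hp.1 j
        · simpa [Function.update_of_ne hj] using hp.1 j, hp.2⟩)
    exact hMono'.2 i
end

section
/- Let f : ℝⁿ → ℝⁿ be continuous and locally Lipschitz, and let [a, b] ⊆ ℝⁿ be a compact interval. Suppose for every index i and every x ∈ [a, b]: if x_i = a_i then f_i(x) ≥ 0, and if x_i = b_i then f_i(x) ≤ 0. Then [a, b] is forward invariant for ẋ = f(x): every C¹ curve x : [0,∞) → ℝⁿ with x'(t) = f(x(t)) and x(0) ∈ [a, b] satisfies x(t) ∈ [a, b] for all t ≥ 0. -/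
/-!
Let `e = y - (a ⊔ y ⊓ b)` be the displacement of `y` from its nearest point in the box and
`φ(y) = ∑ i, e_i ^ 2` the squared distance to the box; `φ` is differentiable with gradient `2 e`.
Along a trajectory `φ' = 2 ∑ i, e_i f_i(x)`. Where `e_i ≠ 0`, the projection lies on the face
`x_i = a_i` or `x_i = b_i` with `e_i` pointing outward, so `e_i f_i(a ⊔ x ⊓ b) ≤ 0` and only the
difference `f(x) - f(a ⊔ x ⊓ b)` can push outward. A Lipschitz constant `C` of `f` on the compact
set swept by `x` and its projection up to time `T` bounds this by `φ' ≤ 2 n C φ`, and Grönwall's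
inequality with `φ(x 0) = 0` keeps `φ(x t) = 0`.
-/

open Set

theorem abs_sq_sub_clamp_sub_le {a b : ℝ} (hab : a ≤ b) (u v : ℝ) :
    |(v - max a (min v b)) ^ 2 - (u - max a (min u b)) ^ 2 - (v - u) * (2 * (u - max a (min u b)))|
      ≤ (v - u) ^ 2 := by
  rw [abs_le]
  simp only [max_def, min_def]
  split_ifs <;> constructor <;> nlinarith

theorem hasDerivAt_sq_sub_clamp {a b : ℝ} (hab : a ≤ b) (u : ℝ) :
    HasDerivAt (fun v => (v - max a (min v b)) ^ 2) (2 * (u - max a (min u b))) u := by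
  rw [hasDerivAt_iff_isLittleO]
  refine (Asymptotics.IsBigO.of_bound 1 (.of_forall fun v => ?_)).trans_isLittleO
    (Asymptotics.isLittleO_pow_sub_sub u one_lt_two)
  simpa using abs_sq_sub_clamp_sub_le hab u v

theorem sub_clamp_mul_nonpos {a b u w : ℝ} (hab : a ≤ b)
    (ha : max a (min u b) = a → 0 ≤ w) (hb : max a (min u b) = b → w ≤ 0) :
    (u - max a (min u b)) * w ≤ 0 := by
  rcases lt_or_ge u a with hua | hau
  · have hclamp : max a (min u b) = a := max_eq_left ((min_le_left u b).trans hua.le)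
    rw [hclamp]
    exact mul_nonpos_of_nonpos_of_nonneg (by linarith) (ha hclamp)
  rcases le_or_gt u b with hub | hbu
  · simp [min_eq_left hub, max_eq_right hau]
  · have hclamp : max a (min u b) = b := by rw [min_eq_right hbu.le, max_eq_right hab]
    rw [hclamp]
    exact mul_nonpos_of_nonneg_of_nonpos (by linarith) (hb hclamp)

theorem sup_inf_mem_Icc {α : Type*} [Lattice α] {a b : α} (hab : a ≤ b) (y : α) :
    a ⊔ y ⊓ b ∈ Icc a b :=
  ⟨le_sup_left, sup_le hab inf_le_right⟩

theorem sup_inf_eq_self_iff {α : Type*} [Lattice α] {a b y : α} (hab : a ≤ b) :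
    a ⊔ y ⊓ b = y ↔ y ∈ Icc a b := by
  refine ⟨fun h => h ▸ sup_inf_mem_Icc hab y, fun ⟨hay, hyb⟩ => ?_⟩
  rw [inf_eq_left.2 hyb, sup_eq_right.2 hay]

theorem sq_norm_le_sum_sq {ι : Type*} [Fintype ι] (v : ι → ℝ) : ‖v‖ ^ 2 ≤ ∑ i, v i ^ 2 := by
  have hsum : 0 ≤ ∑ i, v i ^ 2 := Finset.sum_nonneg fun i _ => sq_nonneg (v i)
  have hsqrt : ‖v‖ ≤ √(∑ i, v i ^ 2) := by
    refine (pi_norm_le_iff_of_nonneg (Real.sqrt_nonneg _)).2 fun i => ?_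
    rw [Real.norm_eq_abs, ← Real.sqrt_sq_eq_abs]
    exact Real.sqrt_le_sqrt (Finset.single_le_sum (fun j _ => sq_nonneg (v j)) (Finset.mem_univ i))
  simpa [Real.sq_sqrt hsum] using pow_le_pow_left₀ (norm_nonneg v) hsqrt 2

section Box

variable {ι : Type*} [Fintype ι] {a b : ι → ℝ}

def sqDistIcc (a b y : ι → ℝ) : ℝ := ∑ i, (y - a ⊔ y ⊓ b) i ^ 2

theorem continuous_sqDistIcc (a b : ι → ℝ) : Continuous (sqDistIcc a b) :=
  continuous_finsetSum _ fun i _ =>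
    ((continuous_apply i).sub (continuous_const.max ((continuous_apply i).min continuous_const))).pow 2

theorem sqDistIcc_nonpos_iff (hab : a ≤ b) {y : ι → ℝ} : sqDistIcc a b y ≤ 0 ↔ y ∈ Icc a b := by
  have hnonneg : ∀ i ∈ Finset.univ, 0 ≤ (y - a ⊔ y ⊓ b) i ^ 2 := fun i _ => sq_nonneg _
  rw [sqDistIcc, (Finset.sum_nonneg hnonneg).ge_iff_eq', Finset.sum_eq_zero_iff_of_nonneg hnonneg,
    ← sup_inf_eq_self_iff hab, eq_comm, ← sub_eq_zero, funext_iff]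
  simp

theorem HasDerivAt.sqDistIcc (hab : a ≤ b) {x : ℝ → ι → ℝ} {x' : ι → ℝ} {t : ℝ}
    (hx : HasDerivAt x x' t) :
    HasDerivAt (fun s => sqDistIcc a b (x s)) (∑ i, 2 * (x t - a ⊔ x t ⊓ b) i * x' i) t :=
  HasDerivAt.fun_sum fun i _ => by
    simpa [Function.comp_def, mul_assoc] using
      (hasDerivAt_sq_sub_clamp (hab i) _).comp t (hasDerivAt_pi.1 hx i)

theorem sum_sub_sup_inf_mul_le_sqDistIcc (hab : a ≤ b) {f : (ι → ℝ) → ι → ℝ}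
    (hface : ∀ i, ∀ x ∈ Icc a b, (x i = a i → 0 ≤ f x i) ∧ (x i = b i → f x i ≤ 0))
    {C : NNReal} {s : Set (ι → ℝ)} (hf : LipschitzOnWith C f s) {y : ι → ℝ}
    (hy : y ∈ s) (hy' : a ⊔ y ⊓ b ∈ s) :
    ∑ i, 2 * (y - a ⊔ y ⊓ b) i * f y i ≤ 2 * Fintype.card ι * C * sqDistIcc a b y := by
  set e := y - a ⊔ y ⊓ b
  have hcoord : ∀ i, 2 * e i * f y i ≤ 2 * C * sqDistIcc a b y := fun i => by
    have hface_i : e i * f (a ⊔ y ⊓ b) i ≤ 0 :=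
      sub_clamp_mul_nonpos (hab i) (hface i _ (sup_inf_mem_Icc hab y)).1
        (hface i _ (sup_inf_mem_Icc hab y)).2
    have hlip : e i * (f y - f (a ⊔ y ⊓ b)) i ≤ C * ‖e‖ ^ 2 := calc
      _ ≤ ‖e i‖ * ‖(f y - f (a ⊔ y ⊓ b)) i‖ := by
        rw [Real.norm_eq_abs, Real.norm_eq_abs, ← abs_mul]
        exact le_abs_self _
      _ ≤ ‖e‖ * ‖f y - f (a ⊔ y ⊓ b)‖ := by gcongr <;> exact norm_le_pi_norm _ i
      _ ≤ ‖e‖ * (C * ‖e‖) := by gcongr; exact hf.norm_sub_le hy hy'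
      _ = C * ‖e‖ ^ 2 := by ring
    have hdist : C * ‖e‖ ^ 2 ≤ C * sqDistIcc a b y :=
      mul_le_mul_of_nonneg_left (sq_norm_le_sum_sq e) C.coe_nonneg
    simp only [Pi.sub_apply] at hlip
    linarith
  calc ∑ i, 2 * e i * f y i ≤ ∑ _i : ι, 2 * C * sqDistIcc a b y :=
        Finset.sum_le_sum fun i _ => hcoord i
    _ = _ := by rw [Finset.sum_const, Finset.card_univ, nsmul_eq_mul]; ring

end Box

theorem nagumo_box_forward_invariant_general {n : ℕ}
    (f : (Fin n → ℝ) → (Fin n → ℝ))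
    (hf_lip : LocallyLipschitz f)
    (a b : Fin n → ℝ)
    (hface : ∀ i : Fin n, ∀ x ∈ Icc a b,
      (x i = a i → 0 ≤ f x i) ∧ (x i = b i → f x i ≤ 0)) :
    ∀ x : ℝ → Fin n → ℝ,
      (∀ t, 0 ≤ t → HasDerivAt x (f (x t)) t) →
      x 0 ∈ Icc a b → ∀ t, 0 ≤ t → x t ∈ Icc a b := by
  intro x hx hx0 T hT
  have hab : a ≤ b := hx0.1.trans hx0.2
  have hx_cont : ContinuousOn x (Icc 0 T) := fun t ht =>
    (hx t ht.1).continuousAt.continuousWithinAt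
  set orbit := x '' Icc 0 T
  have hproj : Continuous fun y : Fin n → ℝ => a ⊔ y ⊓ b :=
    continuous_pi fun i => continuous_const.max ((continuous_apply i).min continuous_const)
  have hcompact : IsCompact (orbit ∪ (fun y => a ⊔ y ⊓ b) '' orbit) :=
    have h := isCompact_Icc.image_of_continuousOn hx_cont
    h.union (h.image hproj)
  obtain ⟨C, hC⟩ := hf_lip.locallyLipschitzOn.exists_lipschitzOnWith_of_compact hcompact
  have hgronwall : ∀ t ∈ Icc 0 T,
      sqDistIcc a b (x t) ≤ gronwallBound 0 (2 * n * C) 0 (t - 0) :=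
    le_gronwallBound_of_liminf_deriv_right_le
      ((continuous_sqDistIcc a b).comp_continuousOn hx_cont)
      (fun t ht r hr => ((hx t ht.1).sqDistIcc hab).hasDerivWithinAt.liminf_right_slope_le hr)
      ((sqDistIcc_nonpos_iff hab).2 hx0) fun t ht => by
        have hxt : x t ∈ orbit := mem_image_of_mem x (Ico_subset_Icc_self ht)
        simpa using sum_sub_sup_inf_mul_le_sqDistIcc hab hface hC (Or.inl hxt)
          (Or.inr (mem_image_of_mem _ hxt))
  rw [← sqDistIcc_nonpos_iff hab]
  simpa [gronwallBound_ε0_δ0] using hgronwall T ⟨hT, le_rfl⟩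

/-- (Nagumo for hyper-rectangles.) If a continuous, locally Lipschitz vector
field points into the box `[a, b]` on each of its faces, then `[a, b]` is forward invariant. -/
theorem nagumo_box_forward_invariant {n : ℕ}
    (f : (Fin n → ℝ) → (Fin n → ℝ))
    (hf_cont : Continuous f) (hf_lip : LocallyLipschitz f)
    (a b : Fin n → ℝ) (hab : a ≤ b)
    (hface : ∀ i : Fin n, ∀ x ∈ Icc a b,
      (x i = a i → 0 ≤ f x i) ∧ (x i = b i → f x i ≤ 0)) :
    ∀ x : ℝ → Fin n → ℝ,
      (∀ t, 0 ≤ t → HasDerivAt x (f (x t)) t) →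
      x 0 ∈ Icc a b → ∀ t, 0 ≤ t → x t ∈ Icc a b :=
  nagumo_box_forward_invariant_general f hf_lip a b hface
end

section
/- Let f : ℝⁿ → ℝⁿ be continuous and let [a, b] ⊆ ℝⁿ be a compact interval. Suppose there exist an index i and a point x' ∈ [a, b] with x'_i = a_i and f_i(x') < 0 (or x'_i = b_i and f_i(x') > 0). Then [a, b] is not forward invariant for ẋ = f(x): there exist a C¹ curve x : [0,T] → ℝⁿ with x'(t) = f(x(t)), x(0) = x' ∈ [a, b], and a time t ∈ (0, T] with x(t) ∉ [a, b]. -/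
/-!
By Peano's theorem the field has a solution through `x'`. Near `t = 0` the `i`-th component of its
velocity keeps the sign of `f x' i`, so the `i`-th coordinate moves strictly past the face
`a i` (resp. `b i`) on which it starts.

Peano's theorem is reduced, by a bump-function cutoff, to a bounded uniformly continuous field.
Smooth uniform approximations of such a field have Picard–Lindelöf solutions that are Lipschitz
with a common constant; Arzelà–Ascoli extracts a uniformly convergent subsequence, and since the
derivatives then converge uniformly as well, the limit solves the equation.
-/

open Set Metric Filter Topology
open scoped NNReal ContDiff

theorem EquicontinuousOn.exists_strictMono_tendstoUniformlyOn {α β : Type*} [TopologicalSpace α]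
    [MetricSpace β] {u : ℕ → α → β} {s : Set α} (hu : EquicontinuousOn u s) (hs : IsCompact s)
    {K : Set β} (hK : IsCompact K) (huK : ∀ k, MapsTo (u k) s K) :
    ∃ φ : ℕ → ℕ, StrictMono φ ∧ ∃ y : α → β, TendstoUniformlyOn (fun k ↦ u (φ k)) y atTop s := by
  have := isCompact_iff_compactSpace.mp hs
  have hequi := (equicontinuous_restrict_iff u).mpr hu
  let F : ℕ → BoundedContinuousFunction s β := fun k ↦
    .mkOfCompact ⟨s.domRestrict (u k), hequi.continuous k⟩
  have hFK : ∀ f ∈ range F, ∀ x, f x ∈ K := by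
    rintro _ ⟨k, rfl⟩ x
    exact huK k x.2
  have hFequi : Equicontinuous ((↑) : range F → s → β) := by
    convert hequi.comp (rangeSplitting F) with f
    exact congrArg DFunLike.coe (apply_rangeSplitting F f).symm
  obtain ⟨G, -, φ, hφ, hlim⟩ := (BoundedContinuousFunction.arzela_ascoli K hK (range F)
    (fun f x hf ↦ hFK f hf x) hFequi).tendsto_subseq
    fun k ↦ subset_closure (mem_range_self k)
  refine ⟨φ, hφ, Function.extend Subtype.val G (u 0), ?_⟩
  rw [tendstoUniformlyOn_iff_tendstoUniformly_comp_coe]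
  convert BoundedContinuousFunction.tendsto_iff_tendstoUniformly.mp hlim using 1
  · rfl
  · exact funext (Subtype.val_injective.extend_apply _ _)

theorem TendstoUniformly.tendstoUniformlyOn_comp {ι α β γ : Type*} [PseudoMetricSpace β]
    [PseudoMetricSpace γ] {l : Filter ι} {g : ι → β → γ} {f : β → γ} {u : ι → α → β}
    {y : α → β} {s : Set α} (hg : TendstoUniformly g f l) (hf : UniformContinuous f)
    (hu : TendstoUniformlyOn u y l s) :
    TendstoUniformlyOn (fun k t ↦ g k (u k t)) (fun t ↦ f (y t)) l s := by
  rw [Metric.tendstoUniformlyOn_iff]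
  intro ε hε
  obtain ⟨δ, hδ, hfδ⟩ := Metric.uniformContinuous_iff.mp hf (ε / 2) (half_pos hε)
  filter_upwards [Metric.tendstoUniformlyOn_iff.mp hu δ hδ,
    Metric.tendstoUniformly_iff.mp hg (ε / 2) (half_pos hε)] with k hu hg t ht
  calc dist (f (y t)) (g k (u k t))
      ≤ dist (f (y t)) (f (u k t)) + dist (f (u k t)) (g k (u k t)) := dist_triangle _ _ _
    _ < ε / 2 + ε / 2 := add_lt_add (hfδ (hu t ht)) (hg _)
    _ = ε := add_halves ε

theorem Filter.Eventually.exists_gt_forall_mem_Icc {P : ℝ → Prop} {a : ℝ} (h : ∀ᶠ t in 𝓝 a, P t) :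
    ∃ b > a, ∀ t ∈ Icc a b, P t := by
  obtain ⟨ε, hε, hP⟩ := Metric.eventually_nhds_iff.mp h
  refine ⟨a + ε / 2, by linarith, fun t ht ↦ hP ?_⟩
  rw [Real.dist_eq, abs_of_nonneg (sub_nonneg.mpr ht.1)]
  linarith [ht.2]

theorem strictMonoOn_of_forall_hasDerivAt_pos {D : Set ℝ} (hD : Convex ℝ D) {u u' : ℝ → ℝ}
    (hu : ∀ t ∈ D, HasDerivAt u (u' t) t) (hpos : ∀ t ∈ D, 0 < u' t) : StrictMonoOn u D :=
  strictMonoOn_of_hasDerivWithinAt_pos hD (fun t ht ↦ (hu t ht).continuousAt.continuousWithinAt)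
    (fun t ht ↦ (hu t (interior_subset ht)).hasDerivWithinAt) fun t ht ↦ hpos t (interior_subset ht)

theorem strictAntiOn_of_forall_hasDerivAt_neg {D : Set ℝ} (hD : Convex ℝ D) {u u' : ℝ → ℝ}
    (hu : ∀ t ∈ D, HasDerivAt u (u' t) t) (hneg : ∀ t ∈ D, u' t < 0) : StrictAntiOn u D :=
  strictAntiOn_of_hasDerivWithinAt_neg hD (fun t ht ↦ (hu t ht).continuousAt.continuousWithinAt)
    (fun t ht ↦ (hu t (interior_subset ht)).hasDerivWithinAt) fun t ht ↦ hneg t (interior_subset ht)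

section

variable {E : Type*} [NormedAddCommGroup E] [NormedSpace ℝ E] [FiniteDimensional ℝ E]

theorem UniformContinuous.exists_contDiff_tendstoUniformly {f : E → E}
    (hf : UniformContinuous f) :
    ∃ g : ℕ → E → E, (∀ k, ContDiff ℝ ∞ (g k)) ∧ (∀ k x, dist (g k x) (f x) < 1) ∧
      TendstoUniformly g f atTop := by
  choose g hg hgf using fun k : ℕ ↦ hf.exists_contDiff_dist_le (Nat.one_div_pos_of_nat (n := k))
  refine ⟨g, hg, fun k x ↦ (hgf k x).trans_le (Nat.one_div_le_one_div (Nat.zero_le k) |>.trans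
    (by norm_num)), Metric.tendstoUniformly_iff.mpr fun ε hε ↦ ?_⟩
  obtain ⟨N, hN⟩ := exists_nat_one_div_lt hε
  filter_upwards [eventually_ge_atTop N] with k hk x
  rw [dist_comm]
  exact (hgf k x).trans_le (Nat.one_div_le_one_div hk) |>.trans hN

theorem ContDiff.exists_lipschitzOnWith_hasDerivAt {g : E → E}
    (hg : ContDiff ℝ 1 g) {C : ℝ≥0} (hC : ∀ x, ‖g x‖ ≤ C) (x₀ : E) {T : ℝ} (hT : 0 ≤ T) :
    ∃ α : ℝ → E, α 0 = x₀ ∧ LipschitzOnWith C α (Icc (-T) T) ∧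
      ∀ t ∈ Ioo (-T) T, HasDerivAt α (g (α t)) t := by
  obtain ⟨K, hK⟩ := hg.locallyLipschitz.locallyLipschitzOn.exists_lipschitzOnWith_of_compact
    (isCompact_closedBall x₀ (C * T.toNNReal))
  have hpl : IsPicardLindelof (fun _ ↦ g) (tmin := -T) (tmax := T) ⟨0, by simp [hT]⟩ x₀
      (C * T.toNNReal) 0 C K :=
    .of_time_independent (fun x _ ↦ hC x) hK (by simp [hT])
  obtain ⟨α, hα0, hα⟩ := hpl.exists_eq_forall_mem_Icc_hasDerivWithinAt₀
  refine ⟨α, hα0, (convex_Icc _ _).lipschitzOnWith_of_nnnorm_hasDerivWithin_le hα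
    fun t _ ↦ by exact_mod_cast hC _, fun t ht ↦ ?_⟩
  exact (hα t (Ioo_subset_Icc_self ht)).hasDerivAt (Icc_mem_nhds ht.1 ht.2)

theorem UniformContinuous.exists_eq_forall_mem_Ioo_hasDerivAt {f : E → E}
    (hf : UniformContinuous f) {C : ℝ≥0} (hC : ∀ x, ‖f x‖ ≤ C) (x₀ : E) {T : ℝ} (hT : 0 ≤ T) :
    ∃ α : ℝ → E, α 0 = x₀ ∧ ∀ t ∈ Ioo (-T) T, HasDerivAt α (f (α t)) t := by
  obtain ⟨g, hg, hgf, hg_lim⟩ := hf.exists_contDiff_tendstoUniformly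
  have hg_bound : ∀ k x, ‖g k x‖ ≤ ↑(C + 1) := fun k x ↦ by
    rw [NNReal.coe_add, NNReal.coe_one, ← dist_zero_right]
    linarith [dist_triangle (g k x) (f x) 0, hgf k x, hC x, dist_zero_right (f x)]
  choose u hu0 hulip hu using fun k ↦
    ((hg k).of_le (by simp)).exists_lipschitzOnWith_hasDerivAt (hg_bound k) x₀ hT
  have h0 : (0 : ℝ) ∈ Icc (-T) T := ⟨by linarith, hT⟩
  have huK : ∀ k, MapsTo (u k) (Icc (-T) T) (closedBall x₀ ((C + 1) * T)) := fun k t ht ↦ by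
    rw [mem_closedBall, ← hu0 k]
    calc dist (u k t) (u k 0) ≤ (C + 1) * dist t 0 := (hulip k).dist_le_mul t ht 0 h0
      _ ≤ (C + 1) * T := by gcongr; exact Real.dist_0_eq_abs t ▸ abs_le.mpr ht
  obtain ⟨φ, hφ, y, hy⟩ := (LipschitzOnWith.uniformEquicontinuousOn u _ hulip).equicontinuousOn
    |>.exists_strictMono_tendstoUniformlyOn isCompact_Icc (isCompact_closedBall _ _) huK
  refine ⟨y, tendsto_nhds_unique (hy.tendsto_at h0) (by simp [hu0]), fun t ht ↦ ?_⟩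
  refine hasDerivAt_of_tendstoUniformlyOn (g' := fun t ↦ f (y t)) isOpen_Ioo ?_
    (.of_forall fun k ↦ hu (φ k)) (fun t ht ↦ hy.tendsto_at (Ioo_subset_Icc_self ht)) ht
  have hgφ := tendstoUniformly_iff_seq_tendstoUniformly.mp hg_lim φ hφ.tendsto_atTop
  exact hgφ.tendstoUniformlyOn_comp hf (hy.mono Ioo_subset_Icc_self)

theorem Continuous.exists_uniformContinuous_bounded_eventuallyEq
    {F : Type*} [NormedAddCommGroup F] [NormedSpace ℝ F] {f : E → F} (hf : Continuous f) (x₀ : E) :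
    ∃ g : E → F, UniformContinuous g ∧ (∃ C : ℝ≥0, ∀ x, ‖g x‖ ≤ C) ∧ g =ᶠ[𝓝 x₀] f := by
  let χ : ContDiffBump x₀ := ⟨1, 2, one_pos, one_lt_two⟩
  have hcont : Continuous fun x ↦ χ x • f x := χ.continuous.smul hf
  have hsupp : HasCompactSupport fun x ↦ χ x • f x := χ.hasCompactSupport.smul_right
  obtain ⟨C, hC⟩ := hsupp.exists_bound_of_continuous hcont
  refine ⟨_, hsupp.uniformContinuous_of_continuous hcont,
    ⟨C.toNNReal, fun x ↦ (hC x).trans (Real.le_coe_toNNReal C)⟩, ?_⟩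
  filter_upwards [closedBall_mem_nhds x₀ one_pos] with x hx
  simp [χ.one_of_mem_closedBall hx]

theorem Continuous.exists_eq_eventually_hasDerivAt {f : E → E}
    (hf : Continuous f) (x₀ : E) :
    ∃ α : ℝ → E, α 0 = x₀ ∧ ∀ᶠ t in 𝓝 0, HasDerivAt α (f (α t)) t := by
  obtain ⟨g, hg, ⟨C, hC⟩, hgf⟩ := hf.exists_uniformContinuous_bounded_eventuallyEq x₀
  obtain ⟨α, hα0, hα⟩ := hg.exists_eq_forall_mem_Ioo_hasDerivAt hC x₀ zero_le_one
  have hαg : ∀ᶠ t in 𝓝 0, HasDerivAt α (g (α t)) t :=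
    eventually_of_mem (Ioo_mem_nhds (by norm_num) one_pos) hα
  have hα_lim : Tendsto α (𝓝 0) (𝓝 x₀) := hα0 ▸ hαg.self_of_nhds.continuousAt.tendsto
  refine ⟨α, hα0, ?_⟩
  filter_upwards [hαg, hα_lim.eventually hgf] with t ht hgt
  rwa [← hgt]

end

theorem box_not_forward_invariant_of_outward_field_general {n : ℕ}
    (f : (Fin n → ℝ) → (Fin n → ℝ))
    (hf_cont : Continuous f)
    (a b : Fin n → ℝ)
    (i : Fin n) (x' : Fin n → ℝ)
    (hviol : (x' i = a i ∧ f x' i < 0) ∨ (x' i = b i ∧ 0 < f x' i)) :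
    ∃ (T : ℝ) (x : ℝ → Fin n → ℝ), 0 < T ∧
      (∀ t ∈ Icc (0:ℝ) T, HasDerivAt x (f (x t)) t) ∧
      x 0 = x' ∧ ∃ t ∈ Ioc (0:ℝ) T, x t ∉ Icc a b := by
  obtain ⟨x, hx0, hx⟩ := hf_cont.exists_eq_eventually_hasDerivAt x'
  have hfx : Tendsto (fun t ↦ f (x t) i) (𝓝 0) (𝓝 (f x' i)) :=
    ((continuous_apply i).comp hf_cont).continuousAt.tendsto.comp
      (hx0 ▸ hx.self_of_nhds.continuousAt.tendsto)
  rcases hviol with ⟨hxa, hneg⟩ | ⟨hxb, hpos⟩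
  · obtain ⟨T, hT, hsol⟩ := (hx.and (hfx.eventually (gt_mem_nhds hneg))).exists_gt_forall_mem_Icc
    have hanti := strictAntiOn_of_forall_hasDerivAt_neg (convex_Icc 0 T)
      (fun t ht ↦ hasDerivAt_pi.mp (hsol t ht).1 i) fun t ht ↦ (hsol t ht).2
    refine ⟨T, x, hT, fun t ht ↦ (hsol t ht).1, hx0, T, ⟨hT, le_rfl⟩, fun hmem ↦ ?_⟩
    have := hanti (left_mem_Icc.2 hT.le) (right_mem_Icc.2 hT.le) hT
    linarith [hmem.1 i, congrFun hx0 i]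
  · obtain ⟨T, hT, hsol⟩ := (hx.and (hfx.eventually (lt_mem_nhds hpos))).exists_gt_forall_mem_Icc
    have hmono := strictMonoOn_of_forall_hasDerivAt_pos (convex_Icc 0 T)
      (fun t ht ↦ hasDerivAt_pi.mp (hsol t ht).1 i) fun t ht ↦ (hsol t ht).2
    refine ⟨T, x, hT, fun t ht ↦ (hsol t ht).1, hx0, T, ⟨hT, le_rfl⟩, fun hmem ↦ ?_⟩
    have := hmono (left_mem_Icc.2 hT.le) (right_mem_Icc.2 hT.le) hT
    linarith [hmem.2 i, congrFun hx0 i]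

/-- If a continuous vector field points strictly out of the box `[a, b]` at a
boundary point `x'`, then `[a, b]` is not forward invariant: some C¹ solution starting at `x'`
leaves the box. -/
theorem box_not_forward_invariant_of_outward_field {n : ℕ}
    (f : (Fin n → ℝ) → (Fin n → ℝ))
    (hf_cont : Continuous f)
    (a b : Fin n → ℝ) (hab : a ≤ b)
    (i : Fin n) (x' : Fin n → ℝ) (hx' : x' ∈ Icc a b)
    (hviol : (x' i = a i ∧ f x' i < 0) ∨ (x' i = b i ∧ 0 < f x' i)) :
    ∃ (T : ℝ) (x : ℝ → Fin n → ℝ), 0 < T ∧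
      (∀ t ∈ Icc (0:ℝ) T, HasDerivAt x (f (x t)) t) ∧
      x 0 = x' ∧ ∃ t ∈ Ioc (0:ℝ) T, x t ∉ Icc a b :=
  box_not_forward_invariant_of_outward_field_general f hf_cont a b i x' hviol
end

section
/- Let N : ℝⁿ → ℝ^p and let [ξ, ξ̄] ⊆ ℝⁿ be an interval for which there are C ∈ ℝ^{p×n} and d, d̄ ∈ ℝ^p with C x + d ≤ N(x) ≤ C x + d̄ for every x ∈ [ξ, ξ̄]. Write C⁺ for the entrywise positive part of C (C⁺_{ij} = max(C_{ij}, 0)) and C⁻ = C − C⁺. Then for every interval [a, b] ⊆ [ξ, ξ̄] and every x ∈ [a, b]: C⁺ a + C⁻ b + d ≤ N(x) ≤ C⁻ a + C⁺ b + d̄. In particular, the pair (a,b) ↦ (C⁺a + C⁻b + d, C⁻a + C⁺b + d̄) is a [ξ,ξ̄]-localized inclusion function for N. -/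
open Set

/-! Splitting `C = C⁺ + C⁻` with `C⁺ ≥ 0 ≥ C⁻` entrywise, `x ↦ C⁺ x` is monotone and `x ↦ C⁻ x`
antitone, so on `[a, b]` the affine part `C x` is bounded below by `C⁺ a + C⁻ b` and above by
`C⁻ a + C⁺ b`; adding the offsets `dl`, `du` and the given affine bounds on `[ξl, ξu] ⊇ [a, b]`
gives the inclusion. -/

namespace Matrix

variable {m n R : Type*} [Fintype n]

theorem mulVec_le_mulVec_of_nonneg [Semiring R] [PartialOrder R] [IsOrderedRing R]
    {A : Matrix m n R} (hA : ∀ i j, 0 ≤ A i j) {u v : n → R} (huv : u ≤ v) :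
    A *ᵥ u ≤ A *ᵥ v :=
  fun i => dotProduct_le_dotProduct_of_nonneg_left huv (hA i)

theorem mulVec_le_mulVec_of_nonpos [Ring R] [PartialOrder R] [IsOrderedRing R]
    {A : Matrix m n R} (hA : ∀ i j, A i j ≤ 0) {u v : n → R} (huv : u ≤ v) :
    A *ᵥ v ≤ A *ᵥ u := by
  have h := mulVec_le_mulVec_of_nonneg (A := -A) (fun i j => neg_nonneg.mpr (hA i j)) huv
  simpa only [neg_mulVec, neg_le_neg_iff] using h

theorem add_mulVec_mem_Icc [Ring R] [PartialOrder R] [IsOrderedRing R]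
    {P Q : Matrix m n R} (hP : ∀ i j, 0 ≤ P i j) (hQ : ∀ i j, Q i j ≤ 0)
    {a b x : n → R} (hx : x ∈ Icc a b) :
    (P + Q) *ᵥ x ∈ Icc (P *ᵥ a + Q *ᵥ b) (Q *ᵥ a + P *ᵥ b) := by
  rw [add_mulVec]
  exact ⟨add_le_add (mulVec_le_mulVec_of_nonneg hP hx.1) (mulVec_le_mulVec_of_nonpos hQ hx.2),
    add_comm (Q *ᵥ a) _ ▸
      add_le_add (mulVec_le_mulVec_of_nonneg hP hx.2) (mulVec_le_mulVec_of_nonpos hQ hx.1)⟩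

end Matrix

theorem affine_bounds_give_localized_inclusion_general {n p : ℕ}
    (N : (Fin n → ℝ) → (Fin p → ℝ))
    (ξl ξu : Fin n → ℝ)
    (C : Matrix (Fin p) (Fin n) ℝ) (dl du : Fin p → ℝ)
    (hbound : ∀ x ∈ Icc ξl ξu, C.mulVec x + dl ≤ N x ∧ N x ≤ C.mulVec x + du)
    (Cpos Cneg : Matrix (Fin p) (Fin n) ℝ)
    (hCpos : ∀ i j, Cpos i j = max (C i j) 0)
    (hCneg : Cneg = C - Cpos)
    (a b : Fin n → ℝ) (hsub : Icc a b ⊆ Icc ξl ξu)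
    (x : Fin n → ℝ) (hx : x ∈ Icc a b) :
    Cpos.mulVec a + Cneg.mulVec b + dl ≤ N x ∧
      N x ≤ Cneg.mulVec a + Cpos.mulVec b + du := by
  have hpos : ∀ i j, 0 ≤ Cpos i j := fun i j => hCpos i j ▸ le_max_right _ _
  have hneg : ∀ i j, Cneg i j ≤ 0 := fun i j => by
    simpa only [hCneg, Matrix.sub_apply, hCpos, sub_nonpos] using le_max_left (C i j) 0
  have hsplit : C = Cpos + Cneg := by rw [hCneg, add_sub_cancel]
  obtain ⟨hlow, hup⟩ := hsplit ▸ Matrix.add_mulVec_mem_Icc hpos hneg hx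
  obtain ⟨hNlow, hNup⟩ := hbound x (hsub hx)
  exact ⟨(add_le_add_left hlow dl).trans hNlow, hNup.trans (add_le_add_left hup du)⟩

/-- If `C x + dl ≤ N(x) ≤ C x + du` on `[ξl, ξu]`, then splitting
`C = C⁺ + C⁻` into positive and negative parts yields, on every subinterval `[a,b] ⊆ [ξl,ξu]`,
the bounds `C⁺a + C⁻b + dl ≤ N(x) ≤ C⁻a + C⁺b + du`; i.e. a `[ξl,ξu]`-localized inclusion
function for `N`. -/
theorem affine_bounds_give_localized_inclusion {n p : ℕ}
    (N : (Fin n → ℝ) → (Fin p → ℝ))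
    (ξl ξu : Fin n → ℝ) (hξ : ξl ≤ ξu)
    (C : Matrix (Fin p) (Fin n) ℝ) (dl du : Fin p → ℝ)
    (hbound : ∀ x ∈ Icc ξl ξu, C.mulVec x + dl ≤ N x ∧ N x ≤ C.mulVec x + du)
    (Cpos Cneg : Matrix (Fin p) (Fin n) ℝ)
    (hCpos : ∀ i j, Cpos i j = max (C i j) 0)
    (hCneg : Cneg = C - Cpos)
    (a b : Fin n → ℝ) (hab : a ≤ b) (hsub : Icc a b ⊆ Icc ξl ξu)
    (x : Fin n → ℝ) (hx : x ∈ Icc a b) :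
    Cpos.mulVec a + Cneg.mulVec b + dl ≤ N x ∧
      N x ≤ Cneg.mulVec a + Cpos.mulVec b + du :=
  affine_bounds_give_localized_inclusion_general N ξl ξu C dl du hbound Cpos Cneg hCpos hCneg a b
    hsub x hx
end

section
/- Let f : ℝⁿ × ℝ^p × ℝ^q → ℝⁿ, N : ℝⁿ → ℝ^p, T ∈ ℝ^{n×n} invertible, and define the transformed closed-loop vector field g^c(y, w) := T f(T⁻¹ y, N(T⁻¹ y), w). Fix intervals [z, z̄] ⊆ ℝⁿ, [u, ū] ⊆ ℝ^p, [w, w̄] ⊆ ℝ^q, points x° ∈ [z, z̄], u° := N(x°), w° ∈ [w, w̄], and interval matrices [J_x^l, J_x^u], [J_u^l, J_u^u], [J_w^l, J_w^u]. Assume: (i) (mean-value bound) for every x ∈ [z, z̄], u ∈ [u, ū], w ∈ [w, w̄] there exist matrices J_x ∈ [J_x^l, J_x^u], J_u ∈ [J_u^l, J_u^u], J_w ∈ [J_w^l, J_w^u] with f(x, u, w) = J_x(x − x°) + J_u(u − u°) + J_w(w − w°) + f(x°, u°, w°); (ii) N(x) ∈ [u, ū] for all x ∈ [z, z̄]; (iii)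 (affine controller bound) there are C' ∈ ℝ^{p×n}, d', d̄' ∈ ℝ^p with C' y + d' ≤ N(T⁻¹ y) ≤ C' y + d̄' for all y ∈ [y, ȳ], where the interval [y, ȳ] satisfies T⁻¹[y, ȳ] ⊆ [z, z̄]. Then for every y ∈ [y, ȳ] and w ∈ [w, w̄] there exist J_x ∈ [J_x^l, J_x^u], J_u ∈ [J_u^l, J_u^u], J_w ∈ [J_w^l, J_w^u], and d ∈ [d', d̄'] such that g^c(y, w) = T (J_x + J_u C' T) T⁻¹ y + T J_u d + T (−J_x x° − J_u u° + J_w (w − w°) + f(x°, u°, w°)). -/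
open Set

/-- Under a mean-value Jacobian bound for `f`, an affine controller bound in
transformed coordinates, and containment hypotheses, the transformed closed-loop vector field
`g^c(y, w) = T f(T⁻¹y, N(T⁻¹y), w)` decomposes, for each `y ∈ [yl, yu]` and `w ∈ [wl, wu]`, as
`T (J_x + J_u C' T) T⁻¹ y + T J_u d + T(−J_x x° − J_u u° + J_w (w − w°) + f(x°, u°, w°))` for
some matrices in the interval matrices and some `d ∈ [dl', du']`. -/
theorem transformed_closed_loop_jacobian_decomposition {n p q : ℕ}
    (f : (Fin n → ℝ) → (Fin p → ℝ) → (Fin q → ℝ) → (Fin n → ℝ))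
    (N : (Fin n → ℝ) → (Fin p → ℝ))
    (T Tinv : Matrix (Fin n) (Fin n) ℝ)
    (hT : T * Tinv = 1) (hT' : Tinv * T = 1)
    (zl zu : Fin n → ℝ) (hz : zl ≤ zu)
    (ul uu : Fin p → ℝ) (hu : ul ≤ uu)
    (wl wu : Fin q → ℝ) (hw : wl ≤ wu)
    (x₀ : Fin n → ℝ) (hx₀ : x₀ ∈ Icc zl zu)
    (u₀ : Fin p → ℝ) (hu₀ : u₀ = N x₀)
    (w₀ : Fin q → ℝ) (hw₀ : w₀ ∈ Icc wl wu)
    (Jxl Jxu : Matrix (Fin n) (Fin n) ℝ)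
    (Jul Juu : Matrix (Fin n) (Fin p) ℝ)
    (Jwl Jwu : Matrix (Fin n) (Fin q) ℝ)
    -- (i) mean-value bound on `[zl,zu] × [ul,uu] × [wl,wu]`
    (hmv : ∀ x ∈ Icc zl zu, ∀ u ∈ Icc ul uu, ∀ w ∈ Icc wl wu,
      ∃ (Jx : Matrix (Fin n) (Fin n) ℝ) (Ju : Matrix (Fin n) (Fin p) ℝ)
        (Jw : Matrix (Fin n) (Fin q) ℝ),
        (∀ i j, Jxl i j ≤ Jx i j ∧ Jx i j ≤ Jxu i j) ∧
        (∀ i j, Jul i j ≤ Ju i j ∧ Ju i j ≤ Juu i j) ∧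
        (∀ i j, Jwl i j ≤ Jw i j ∧ Jw i j ≤ Jwu i j) ∧
        f x u w = Jx.mulVec (x - x₀) + Ju.mulVec (u - u₀) + Jw.mulVec (w - w₀) + f x₀ u₀ w₀)
    -- (ii) controller range containment
    (hN : ∀ x ∈ Icc zl zu, N x ∈ Icc ul uu)
    (yl yu : Fin n → ℝ) (hy : yl ≤ yu)
    (hYZ : ∀ y ∈ Icc yl yu, Tinv.mulVec y ∈ Icc zl zu)
    -- (iii) affine controller bound in transformed coordinates
    (C' : Matrix (Fin p) (Fin n) ℝ) (dl' du' : Fin p → ℝ)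
    (hC : ∀ y ∈ Icc yl yu,
      C'.mulVec y + dl' ≤ N (Tinv.mulVec y) ∧ N (Tinv.mulVec y) ≤ C'.mulVec y + du') :
    ∀ y ∈ Icc yl yu, ∀ w ∈ Icc wl wu,
      ∃ (Jx : Matrix (Fin n) (Fin n) ℝ) (Ju : Matrix (Fin n) (Fin p) ℝ)
        (Jw : Matrix (Fin n) (Fin q) ℝ) (d : Fin p → ℝ),
        (∀ i j, Jxl i j ≤ Jx i j ∧ Jx i j ≤ Jxu i j) ∧
        (∀ i j, Jul i j ≤ Ju i j ∧ Ju i j ≤ Juu i j) ∧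
        (∀ i j, Jwl i j ≤ Jw i j ∧ Jw i j ≤ Jwu i j) ∧
        d ∈ Icc dl' du' ∧
        T.mulVec (f (Tinv.mulVec y) (N (Tinv.mulVec y)) w) =
          T.mulVec ((Jx + Ju * C' * T).mulVec (Tinv.mulVec y)) +
            T.mulVec (Ju.mulVec d) +
            T.mulVec (-(Jx.mulVec x₀) - Ju.mulVec u₀ + Jw.mulVec (w - w₀) + f x₀ u₀ w₀) := by
  intro y hy' w hw'
  have hx : Tinv.mulVec y ∈ Icc zl zu := hYZ y hy'
  obtain ⟨Jx, Ju, Jw, hJx, hJu, hJw, hf⟩ :=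
    hmv (Tinv.mulVec y) hx (N (Tinv.mulVec y)) (hN _ hx) w hw'
  obtain ⟨hCl, hCu⟩ := hC y hy'
  refine ⟨Jx, Ju, Jw, N (Tinv.mulVec y) - C'.mulVec y, hJx, hJu, hJw, ?_, ?_⟩
  · constructor
    · intro i; have := hCl i; simp [Pi.add_apply] at this ⊢; linarith
    · intro i; have := hCu i; simp [Pi.add_apply] at this ⊢; linarith
  · have hTy : T.mulVec (Tinv.mulVec y) = y := by
      rw [Matrix.mulVec_mulVec, hT, Matrix.one_mulVec]
    rw [← Matrix.mulVec_add, ← Matrix.mulVec_add]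
    congr 1
    rw [hf]
    have hexp : (Jx + Ju * C' * T).mulVec (Tinv.mulVec y)
        = Jx.mulVec (Tinv.mulVec y) + Ju.mulVec (C'.mulVec y) := by
      rw [Matrix.add_mulVec, ← Matrix.mulVec_mulVec, ← Matrix.mulVec_mulVec, hTy]
    rw [hexp]
    have : Ju.mulVec (N (Tinv.mulVec y) - u₀)
        = Ju.mulVec (C'.mulVec y) + Ju.mulVec (N (Tinv.mulVec y) - C'.mulVec y)
          - Ju.mulVec u₀ := by
      rw [← Matrix.mulVec_add, ← Matrix.mulVec_sub]
      congr 1; abel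
    rw [Matrix.mulVec_sub Jx, this]
    abel
end
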